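/- arXiv:2502.09842 — 2 statements merged into one kernel-verified Lean document; each statement's English description precedes it below -/
import Mathlib

section
/- Discrete Grönwall inequality (no time-step restriction): Let Δt ≥ 0 and E ≥ 0 be real numbers, and let (a_n), (b_n), (c_n), (d_n) be sequences of nonnegative real numbers indexed by n ≥ 1. Suppose that for every natural number M ≥ 1 one has a_M + Δt·Σ_{n=1}^{M} b_n ≤ Δt·Σ_{n=1}^{M-1} d_n·a_n + Δt·Σ_{n=1}^{M} c_n + E. Then for every natural number M ≥ 1, a_M + Δt·Σ_{n=1}^{M} b_n ≤ exp(Δt·Σ_{n=1}^{M-1} d_n) · (Δt·Σ_{n=1}^{M} c_n + E). -/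
open Finset

lemma gronwall_key (Δt : ℝ) (hΔt : 0 ≤ Δt) (d : ℕ → ℝ)
    (hd : ∀ n, 1 ≤ n → 0 ≤ d n) :
    ∀ M : ℕ, Δt * ∑ n ∈ Icc 1 M, d n * Real.exp (Δt * ∑ k ∈ Icc 1 (n-1), d k) + 1 ≤
      Real.exp (Δt * ∑ n ∈ Icc 1 M, d n) := by
  intro M
  induction M with
  | zero => simp [Real.exp_nonneg]
  | succ M ih =>
    rw [Finset.sum_Icc_succ_top (by omega : 1 ≤ M + 1),
        Finset.sum_Icc_succ_top (by omega : 1 ≤ M + 1)]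
    simp only [Nat.add_sub_cancel]
    have hfM : (0:ℝ) ≤ Real.exp (Δt * ∑ k ∈ Icc 1 M, d k) := (Real.exp_pos _).le
    have hdM : 0 ≤ d (M + 1) := hd _ (by omega)
    have h1 : Real.exp (Δt * (∑ n ∈ Icc 1 M, d n + d (M+1)))
        = Real.exp (Δt * ∑ n ∈ Icc 1 M, d n) * Real.exp (Δt * d (M+1)) := by
      rw [← Real.exp_add]; ring_nf
    have h2 : (1 + Δt * d (M+1)) ≤ Real.exp (Δt * d (M+1)) := by
      have := Real.add_one_le_exp (Δt * d (M+1)); linarith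
    have h3 : Real.exp (Δt * ∑ n ∈ Icc 1 M, d n) * (1 + Δt * d (M+1)) ≤
        Real.exp (Δt * ∑ n ∈ Icc 1 M, d n) * Real.exp (Δt * d (M+1)) :=
      mul_le_mul_of_nonneg_left h2 hfM
    rw [h1]
    nlinarith [mul_nonneg hΔt hdM]

/-- Discrete Grönwall inequality (no time-step restriction). Sums over empty
index ranges (e.g. `Finset.Icc 1 0`) are zero. -/
theorem discrete_gronwall_inequality
    (Δt E : ℝ) (hΔt : 0 ≤ Δt) (hE : 0 ≤ E)
    (a b c d : ℕ → ℝ)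
    (ha : ∀ n, 1 ≤ n → 0 ≤ a n) (hb : ∀ n, 1 ≤ n → 0 ≤ b n)
    (hc : ∀ n, 1 ≤ n → 0 ≤ c n) (hd : ∀ n, 1 ≤ n → 0 ≤ d n)
    (h : ∀ M : ℕ, 1 ≤ M →
      a M + Δt * ∑ n ∈ Icc 1 M, b n ≤
        Δt * ∑ n ∈ Icc 1 (M - 1), d n * a n + Δt * ∑ n ∈ Icc 1 M, c n + E) :
    ∀ M : ℕ, 1 ≤ M →
      a M + Δt * ∑ n ∈ Icc 1 M, b n ≤
        Real.exp (Δt * ∑ n ∈ Icc 1 (M - 1), d n) *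
          (Δt * ∑ n ∈ Icc 1 M, c n + E) := by
  intro M
  induction M using Nat.strong_induction_on with
  | _ M ih =>
    intro hM
    set C : ℝ := Δt * ∑ n ∈ Icc 1 M, c n + E with hC
    have hCnn : 0 ≤ C := by
      have : 0 ≤ ∑ n ∈ Icc 1 M, c n :=
        Finset.sum_nonneg fun n hn => hc n (Finset.mem_Icc.mp hn).1
      positivity
    have hterm : ∀ n ∈ Icc 1 (M - 1),
        d n * a n ≤ d n * (Real.exp (Δt * ∑ k ∈ Icc 1 (n-1), d k) * C) := by
      intro n hn
      obtain ⟨hn1, hn2⟩ := Finset.mem_Icc.mp hn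
      have hlt : n < M := by omega
      have hbn : 0 ≤ Δt * ∑ k ∈ Icc 1 n, b k :=
        mul_nonneg hΔt (Finset.sum_nonneg fun k hk => hb k (Finset.mem_Icc.mp hk).1)
      have han := ih n hlt hn1
      have hCn : Δt * ∑ k ∈ Icc 1 n, c k + E ≤ C := by
        have hsub : ∑ k ∈ Icc 1 n, c k ≤ ∑ k ∈ Icc 1 M, c k := by
          apply Finset.sum_le_sum_of_subset_of_nonneg
          · exact Finset.Icc_subset_Icc_right (by omega)
          · intro k hk _; exact hc k (Finset.mem_Icc.mp hk).1
        have := mul_le_mul_of_nonneg_left hsub hΔt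
        simp only [hC]; linarith
      have : a n ≤ Real.exp (Δt * ∑ k ∈ Icc 1 (n-1), d k) * C := by
        calc a n ≤ a n + Δt * ∑ k ∈ Icc 1 n, b k := by linarith
          _ ≤ Real.exp (Δt * ∑ k ∈ Icc 1 (n-1), d k) * (Δt * ∑ k ∈ Icc 1 n, c k + E) := han
          _ ≤ Real.exp (Δt * ∑ k ∈ Icc 1 (n-1), d k) * C :=
            mul_le_mul_of_nonneg_left hCn (Real.exp_pos _).le
      exact mul_le_mul_of_nonneg_left this (hd n hn1)
    have hsum : ∑ n ∈ Icc 1 (M-1), d n * a n ≤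
        (∑ n ∈ Icc 1 (M-1), d n * Real.exp (Δt * ∑ k ∈ Icc 1 (n-1), d k)) * C := by
      rw [Finset.sum_mul]
      apply Finset.sum_le_sum
      intro n hn
      have := hterm n hn
      linarith [this]
    have hkey := gronwall_key Δt hΔt d hd (M - 1)
    calc a M + Δt * ∑ n ∈ Icc 1 M, b n
        ≤ Δt * ∑ n ∈ Icc 1 (M-1), d n * a n + C := by
          have := h M hM; linarith
      _ ≤ Δt * ((∑ n ∈ Icc 1 (M-1), d n * Real.exp (Δt * ∑ k ∈ Icc 1 (n-1), d k)) * C) + C := by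
          have := mul_le_mul_of_nonneg_left hsum hΔt; linarith
      _ = (Δt * ∑ n ∈ Icc 1 (M-1), d n * Real.exp (Δt * ∑ k ∈ Icc 1 (n-1), d k) + 1) * C := by
          ring
      _ ≤ Real.exp (Δt * ∑ n ∈ Icc 1 (M-1), d n) * C :=
          mul_le_mul_of_nonneg_right hkey hCnn
end

section
/- Gradient bound for the trilinear form in three dimensions: Let D be a bounded measurable subset of ℝ³. There exists a constant C > 0, depending only on D, such that for all continuously differentiable compactly supported vector fields u, v, w : ℝ³ → ℝ³ whose supports are contained in D, one has |b*(u,v,w)| ≤ C · ‖Du‖_{L²} · ‖Dv‖_{L²} · ‖Dw‖_{L²}. -/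
open MeasureTheory
open scoped RealInnerProductSpace

/-- The convective term `u·∇v`, i.e. `x ↦ Dv(x)(u(x))`. -/
noncomputable def convTerm {d : ℕ}
    (u v : EuclideanSpace ℝ (Fin d) → EuclideanSpace ℝ (Fin d)) :
    EuclideanSpace ℝ (Fin d) → EuclideanSpace ℝ (Fin d) :=
  fun x => fderiv ℝ v x (u x)

/-- The L² inner product `(f, g) = ∫ f(x)·g(x) dx` of two vector fields. -/
noncomputable def l2inner {d : ℕ}
    (f g : EuclideanSpace ℝ (Fin d) → EuclideanSpace ℝ (Fin d)) : ℝ :=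
  ∫ x, ⟪f x, g x⟫

/-- The skew-symmetric trilinear form `b*(u,v,w) = ½(u·∇v, w) − ½(u·∇w, v)`. -/
noncomputable def bstar {d : ℕ}
    (u v w : EuclideanSpace ℝ (Fin d) → EuclideanSpace ℝ (Fin d)) : ℝ :=
  (1 / 2) * l2inner (convTerm u v) w - (1 / 2) * l2inner (convTerm u w) v

/-- The Frobenius norm of the Jacobian matrix of `v` at `x`:
`(∑ i ‖Dv(x) eᵢ‖²)^{1/2} = (∑ i ∑ j (∂vⱼ/∂xᵢ)²)^{1/2}`. -/
noncomputable def frobNorm {d : ℕ}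
    (v : EuclideanSpace ℝ (Fin d) → EuclideanSpace ℝ (Fin d))
    (x : EuclideanSpace ℝ (Fin d)) : ℝ :=
  Real.sqrt (∑ i : Fin d, ‖fderiv ℝ v x (EuclideanSpace.single i 1)‖ ^ 2)

/-- `‖Dv‖_{L²}`: the L² norm over `ℝ^d` of `x ↦ ‖Dv(x)‖_F`. -/
noncomputable def gradL2 {d : ℕ}
    (v : EuclideanSpace ℝ (Fin d) → EuclideanSpace ℝ (Fin d)) : ℝ :=
  (eLpNorm (fun x => frobNorm v x) 2 volume).toReal

/-!
Hölder's inequality with exponents `(2, 4, 4)` bounds `(u·∇v, w)` by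
`‖Dv‖_{L²} ‖u‖_{L⁴} ‖w‖_{L⁴}`. In three dimensions the Sobolev exponent of `L²` is `6 ≥ 4`, so the
Gagliardo–Nirenberg–Sobolev inequality on the bounded set `D` controls `‖u‖_{L⁴}` and `‖w‖_{L⁴}`
by `‖Du‖_{L²}` and `‖Dw‖_{L²}`; finally, the operator norm of a Jacobian is at most its Frobenius
norm. The same bound for `(u·∇w, v)` gives the bound for `b*`.
-/

open scoped ENNReal

theorem ContinuousLinearMap.opNorm_le_sqrt_sum_sq_apply_single {ι F : Type*} [Fintype ι]
    [DecidableEq ι] [SeminormedAddCommGroup F] [NormedSpace ℝ F]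
    (A : EuclideanSpace ℝ ι →L[ℝ] F) :
    ‖A‖ ≤ √(∑ i, ‖A (EuclideanSpace.single i 1)‖ ^ 2) := by
  refine A.opNorm_le_bound (Real.sqrt_nonneg _) fun y => ?_
  have hy : ∑ i, y i • A (EuclideanSpace.single i 1) = A y := by
    simpa [map_sum] using congrArg A ((EuclideanSpace.basisFun ι ℝ).sum_repr y)
  calc ‖A y‖ = ‖∑ i, y i • A (EuclideanSpace.single i 1)‖ := by rw [hy]
    _ ≤ ∑ i, ‖y i‖ * ‖A (EuclideanSpace.single i 1)‖ := by
        refine (norm_sum_le _ _).trans_eq ?_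
        simp [norm_smul]
    _ ≤ √(∑ i, ‖y i‖ ^ 2) * √(∑ i, ‖A (EuclideanSpace.single i 1)‖ ^ 2) :=
        Real.sum_mul_le_sqrt_mul_sqrt _ _ _
    _ = _ := by rw [EuclideanSpace.norm_eq, mul_comm]

section FrobeniusNorm

variable {d : ℕ} {v : EuclideanSpace ℝ (Fin d) → EuclideanSpace ℝ (Fin d)}

theorem norm_fderiv_le_frobNorm (v : EuclideanSpace ℝ (Fin d) → EuclideanSpace ℝ (Fin d))
    (x : EuclideanSpace ℝ (Fin d)) : ‖fderiv ℝ v x‖ ≤ frobNorm v x :=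
  (fderiv ℝ v x).opNorm_le_sqrt_sum_sq_apply_single

theorem eLpNorm_fderiv_le_eLpNorm_frobNorm
    (v : EuclideanSpace ℝ (Fin d) → EuclideanSpace ℝ (Fin d)) (p : ℝ≥0∞)
    (μ : Measure (EuclideanSpace ℝ (Fin d))) :
    eLpNorm (fderiv ℝ v) p μ ≤ eLpNorm (frobNorm v) p μ :=
  eLpNorm_mono fun x => (norm_fderiv_le_frobNorm v x).trans (Real.le_norm_self _)

theorem ContDiff.continuous_frobNorm (hv : ContDiff ℝ 1 v) : Continuous (frobNorm v) := by
  have := hv.continuous_fderiv one_ne_zero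
  unfold frobNorm
  fun_prop

theorem HasCompactSupport.frobNorm (hv : HasCompactSupport v) :
    HasCompactSupport (frobNorm v) :=
  show HasCompactSupport
      ((fun A : EuclideanSpace ℝ (Fin d) →L[ℝ] EuclideanSpace ℝ (Fin d) =>
        √(∑ i, ‖A (EuclideanSpace.single i 1)‖ ^ 2)) ∘ fderiv ℝ v) from
    (hv.fderiv ℝ).comp_left (by simp)

theorem eLpNorm_frobNorm_ne_top (hv : ContDiff ℝ 1 v) (hcv : HasCompactSupport v)
    (p : ℝ≥0∞) (μ : Measure (EuclideanSpace ℝ (Fin d))) [IsFiniteMeasureOnCompacts μ] :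
    eLpNorm (frobNorm v) p μ ≠ ∞ :=
  (hv.continuous_frobNorm.memLp_of_hasCompactSupport hcv.frobNorm).eLpNorm_ne_top

end FrobeniusNorm

theorem enorm_l2inner_convTerm_le {d : ℕ} {p q r : ℝ≥0∞} (hpqr : p⁻¹ + q⁻¹ + r⁻¹ = 1)
    {u v w : EuclideanSpace ℝ (Fin d) → EuclideanSpace ℝ (Fin d)}
    (hu : AEStronglyMeasurable u) (hw : AEStronglyMeasurable w) :
    ‖l2inner (convTerm u v) w‖ₑ ≤
      eLpNorm (fderiv ℝ v) p volume * eLpNorm u q volume * eLpNorm w r volume := by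
  set s := (p⁻¹ + q⁻¹)⁻¹
  have : ENNReal.HolderTriple p q s := .of p q
  have : ENNReal.HolderTriple s r 1 := ⟨by rw [inv_inv, hpqr, inv_one]⟩
  have hv : AEStronglyMeasurable (fderiv ℝ v) := (measurable_fderiv ℝ v).aestronglyMeasurable
  have hconv : eLpNorm (convTerm u v) s volume ≤
      eLpNorm (fderiv ℝ v) p volume * eLpNorm u q volume := by
    show eLpNorm (fun x => fderiv ℝ v x (u x)) s volume ≤ _
    simpa using eLpNorm_le_eLpNorm_mul_eLpNorm'_of_norm hv hu (fun A y => A y) 1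
      (.of_forall fun x => by simpa using (fderiv ℝ v x).le_opNorm (u x))
  have hconv_meas : AEStronglyMeasurable (convTerm u v) :=
    isBoundedBilinearMap_apply.continuous.comp_aestronglyMeasurable (hv.prodMk hu)
  calc ‖l2inner (convTerm u v) w‖ₑ ≤ eLpNorm (fun x => ⟪convTerm u v x, w x⟫) 1 volume := by
        rw [eLpNorm_one_eq_lintegral_enorm]
        exact enorm_integral_le_lintegral_enorm _
    _ ≤ eLpNorm (convTerm u v) s volume * eLpNorm w r volume := by
        simpa using eLpNorm_le_eLpNorm_mul_eLpNorm'_of_norm hconv_meas hw (fun a b => ⟪a, b⟫) 1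
          (.of_forall fun x => by simpa using norm_inner_le_norm (𝕜 := ℝ) _ _)
    _ ≤ _ := by gcongr

theorem eLpNorm_four_le_eLpNorm_fderiv_two {E F : Type*} [NormedAddCommGroup E]
    [NormedSpace ℝ E] [MeasurableSpace E] [BorelSpace E] [FiniteDimensional ℝ E]
    (μ : Measure E) [μ.IsAddHaarMeasure] [NormedAddCommGroup F] [NormedSpace ℝ F]
    [FiniteDimensional ℝ F] (hE : Module.finrank ℝ E = 3) {u : E → F} {s : Set E}
    (hu : ContDiff ℝ 1 u) (hus : u.support ⊆ s) (hs : Bornology.IsBounded s) :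
    eLpNorm u 4 μ ≤ eLpNormLESNormFDerivOfLeConst F μ s 2 4 * eLpNorm (fderiv ℝ u) 2 μ :=
  eLpNorm_le_eLpNorm_fderiv_of_le (μ := μ) hu hus (by norm_num) (by rw [hE]; norm_num)
    (by rw [hE]; norm_num) hs

theorem abs_bstar_le {d : ℕ} (u v w : EuclideanSpace ℝ (Fin d) → EuclideanSpace ℝ (Fin d)) :
    |bstar u v w| ≤ (|l2inner (convTerm u v) w| + |l2inner (convTerm u w) v|) / 2 := by
  unfold bstar
  refine (abs_sub _ _).trans_eq ?_
  rw [abs_mul, abs_mul, abs_of_pos one_half_pos]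
  ring

section Dim3

variable {D : Set (EuclideanSpace ℝ (Fin 3))}
  {u v w : EuclideanSpace ℝ (Fin 3) → EuclideanSpace ℝ (Fin 3)}

theorem abs_l2inner_convTerm_le_gradL2 (hD : Bornology.IsBounded D)
    (hu : ContDiff ℝ 1 u) (hv : ContDiff ℝ 1 v) (hw : ContDiff ℝ 1 w)
    (hcu : HasCompactSupport u) (hcv : HasCompactSupport v) (hcw : HasCompactSupport w)
    (hsu : u.support ⊆ D) (hsw : w.support ⊆ D) :
    |l2inner (convTerm u v) w| ≤
      (eLpNormLESNormFDerivOfLeConst (EuclideanSpace ℝ (Fin 3)) volume D 2 4 : ℝ) ^ 2 *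
        gradL2 u * gradL2 v * gradL2 w := by
  set K := eLpNormLESNormFDerivOfLeConst (EuclideanSpace ℝ (Fin 3)) volume D 2 4
  have hexp : (2 : ℝ≥0∞)⁻¹ + 4⁻¹ + 4⁻¹ = 1 := by
    rw [add_assoc, ← two_mul, show (4 : ℝ≥0∞) = 2 * 2 by norm_num,
      ENNReal.mul_inv (by simp) (by simp), ← mul_assoc, ENNReal.mul_inv_cancel (by simp) (by simp),
      one_mul, ENNReal.inv_two_add_inv_two]
  have sobolev {f : EuclideanSpace ℝ (Fin 3) → EuclideanSpace ℝ (Fin 3)} (hf : ContDiff ℝ 1 f)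
      (hsf : f.support ⊆ D) : eLpNorm f 4 volume ≤ K * eLpNorm (frobNorm f) 2 volume :=
    (eLpNorm_four_le_eLpNorm_fderiv_two volume (by simp) hf hsf hD).trans
      (by gcongr; exact eLpNorm_fderiv_le_eLpNorm_frobNorm f 2 volume)
  have hbound : ‖l2inner (convTerm u v) w‖ₑ ≤ (K * eLpNorm (frobNorm u) 2 volume) *
      eLpNorm (frobNorm v) 2 volume * (K * eLpNorm (frobNorm w) 2 volume) := by
    calc _ ≤ eLpNorm (fderiv ℝ v) 2 volume * eLpNorm u 4 volume * eLpNorm w 4 volume :=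
          enorm_l2inner_convTerm_le hexp hu.continuous.aestronglyMeasurable
            hw.continuous.aestronglyMeasurable
      _ ≤ eLpNorm (frobNorm v) 2 volume * (K * eLpNorm (frobNorm u) 2 volume) *
            (K * eLpNorm (frobNorm w) 2 volume) := by
          gcongr
          exacts [eLpNorm_fderiv_le_eLpNorm_frobNorm v 2 volume, sobolev hu hsu, sobolev hw hsw]
      _ = _ := by ring
  calc |l2inner (convTerm u v) w| = ‖l2inner (convTerm u v) w‖ₑ.toReal := by simp
    _ ≤ ((K * eLpNorm (frobNorm u) 2 volume) * eLpNorm (frobNorm v) 2 volume *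
          (K * eLpNorm (frobNorm w) 2 volume)).toReal :=
        ENNReal.toReal_mono (by
          finiteness [eLpNorm_frobNorm_ne_top hu hcu 2 volume,
            eLpNorm_frobNorm_ne_top hv hcv 2 volume, eLpNorm_frobNorm_ne_top hw hcw 2 volume]) hbound
    _ = _ := by simp only [ENNReal.toReal_mul, ENNReal.coe_toReal, gradL2]; ring

end Dim3

theorem bstar_gradient_bound_3d_general
    (D : Set (EuclideanSpace ℝ (Fin 3)))
    (hD : Bornology.IsBounded D) :
    ∃ C > 0, ∀ u v w : EuclideanSpace ℝ (Fin 3) → EuclideanSpace ℝ (Fin 3),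
      ContDiff ℝ 1 u → ContDiff ℝ 1 v → ContDiff ℝ 1 w →
      HasCompactSupport u → HasCompactSupport v → HasCompactSupport w →
      Function.support u ⊆ D → Function.support v ⊆ D → Function.support w ⊆ D →
      |bstar u v w| ≤ C * gradL2 u * gradL2 v * gradL2 w := by
  set K : ℝ := (eLpNormLESNormFDerivOfLeConst (EuclideanSpace ℝ (Fin 3)) volume D 2 4 : ℝ)
  refine ⟨K ^ 2 + 1, by positivity, fun u v w hu hv hw hcu hcv hcw hsu hsv hsw => ?_⟩
  have hvw := abs_l2inner_convTerm_le_gradL2 hD hu hv hw hcu hcv hcw hsu hsw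
  have hwv := abs_l2inner_convTerm_le_gradL2 hD hu hw hv hcu hcw hcv hsu hsv
  have hnonneg : 0 ≤ gradL2 u * gradL2 v * gradL2 w := by unfold gradL2; positivity
  calc |bstar u v w| ≤ (|l2inner (convTerm u v) w| + |l2inner (convTerm u w) v|) / 2 :=
        abs_bstar_le u v w
    _ ≤ K ^ 2 * (gradL2 u * gradL2 v * gradL2 w) := by linarith
    _ ≤ (K ^ 2 + 1) * gradL2 u * gradL2 v * gradL2 w := by nlinarith

/-- Gradient bound for the trilinear form in three dimensions: for a bounded
measurable `D ⊆ ℝ³` there is `C > 0`, depending only on `D`, with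
`|b*(u,v,w)| ≤ C ‖Du‖_{L²} ‖Dv‖_{L²} ‖Dw‖_{L²}` for all C¹ compactly supported
vector fields supported in `D`. -/
theorem bstar_gradient_bound_3d
    (D : Set (EuclideanSpace ℝ (Fin 3)))
    (hD : Bornology.IsBounded D) (hDm : MeasurableSet D) :
    ∃ C > 0, ∀ u v w : EuclideanSpace ℝ (Fin 3) → EuclideanSpace ℝ (Fin 3),
      ContDiff ℝ 1 u → ContDiff ℝ 1 v → ContDiff ℝ 1 w →
      HasCompactSupport u → HasCompactSupport v → HasCompactSupport w →
      Function.support u ⊆ D → Function.support v ⊆ D → Function.support w ⊆ D →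
      |bstar u v w| ≤ C * gradL2 u * gradL2 v * gradL2 w :=
  bstar_gradient_bound_3d_general D hD
end
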